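/- Suppose the associative unital k-algebra A is commutative. Then orientation-reversal induces a well-defined k-linear involution on Hochschild cohomology: if f is a degree-n cocycle then so is f̃; if f and f' are degree-n cocycles differing by a coboundary then f̃ and f'̃ differ by a coboundary; and the induced map [f] ↦ [f̃] on HH^n(A;A) satisfies ([f̃])̃ = [f], where f̃(a₁,…,aₙ) = (−1)^{n(n+1)/2} f(aₙ,…,a₁). -/
import Mathlib


open scoped BigOperators

section Defs

variable {A : Type*}

/-- Contract a tuple of length `n+1` by multiplying the adjacent entries in
positions `j` and `j+1`. -/
def hcContract [Mul A] {n : ℕ} (a : Fin (n + 1) → A) (j : Fin n) : Fin n → A :=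
  fun i =>
    if (i : ℕ) < (j : ℕ) then a i.castSucc
    else if (i : ℕ) = (j : ℕ) then a i.castSucc * a i.succ
    else a i.succ

/-- The Hochschild differential on (the underlying functions of) cochains with
values in a bimodule `M`, the bimodule structure being given by `lsmul` and `rsmul`. -/
def hcDiff [Ring A] {M : Type*} [AddCommGroup M]
    (lsmul : A → M → M) (rsmul : M → A → M) {n : ℕ}
    (f : (Fin n → A) → M) : (Fin (n + 1) → A) → M :=
  fun a =>
    lsmul (a 0) (f fun i => a i.succ)
      + ∑ j : Fin n, ((-1 : ℤ) ^ ((j : ℕ) + 1)) • f (hcContract a j)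
      + ((-1 : ℤ) ^ (n + 1)) • rsmul (f fun i => a i.castSucc) (a (Fin.last n))

/-- The Hochschild differential for cochains with values in `A` itself. -/
def hcDeltaA [Ring A] {n : ℕ} (f : (Fin n → A) → A) : (Fin (n + 1) → A) → A :=
  hcDiff (fun a m => a * m) (fun m a => m * a) f

/-- Orientation reversal of a degree-`n` cochain:
`f̃(a₁,…,aₙ) = (−1)^{n(n+1)/2} f(aₙ,…,a₁)`. -/
def hcRev [Ring A] {n : ℕ} (f : (Fin n → A) → A) : (Fin n → A) → A :=
  fun a => ((-1 : ℤ) ^ (n * (n + 1) / 2)) • f fun i => a i.rev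

/-- Two degree-`n` cochains represent the same Hochschild cohomology class if
they differ by a coboundary (in degree `0` there are no nonzero coboundaries). -/
def Cohomologous (k : Type*) {A : Type*} [Field k] [Ring A] [Algebra k A] {n : ℕ}
    (f g : (Fin n → A) → A) : Prop :=
  (n = 0 ∧ f = g) ∨
    ∃ (m : ℕ) (hm : m + 1 = n) (h : MultilinearMap k (fun _ : Fin m => A) A),
      ∀ a : Fin n → A, f a - g a = hcDeltaA (⇑h) (fun i => a (Fin.cast hm i))

end Defs

section MyAux

lemma my_neg_one_pow_parity (a b : ℕ) (h : a % 2 = b % 2) : (-1:ℤ)^a = (-1:ℤ)^b := by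
  conv_lhs => rw [← Nat.div_add_mod a 2]
  conv_rhs => rw [← Nat.div_add_mod b 2]
  rw [pow_add, pow_add, pow_mul, pow_mul, h]
  norm_num

lemma my_sign_succ (n : ℕ) :
    (-1:ℤ)^((n+1)*((n+1)+1)/2) = (-1:ℤ)^(n*(n+1)/2) * (-1:ℤ)^(n+1) := by
  rw [← pow_add]
  apply my_neg_one_pow_parity
  have h1 : (n+1)*((n+1)+1) = n*(n+1) + 2*(n+1) := by ring
  have h2 : n*(n+1) % 2 = 0 := Nat.even_iff.mp (Nat.even_mul_succ_self n)
  set x := n*(n+1)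
  set y := (n+1)*((n+1)+1)
  omega

lemma my_rev_succ {n : ℕ} (i : Fin n) : (i.rev).succ = (i.castSucc).rev := by
  ext; simp [Fin.val_rev]; omega

lemma my_rev_castSucc {n : ℕ} (i : Fin n) : (i.rev).castSucc = (i.succ).rev := by
  ext; simp only [Fin.val_rev, Fin.coe_castSucc, Fin.val_succ]; omega

variable {A : Type*} [CommRing A]

lemma my_contract_rev {n : ℕ} (a : Fin (n+1) → A) (j : Fin n) :
    hcContract (fun i => a i.rev) j = fun i => hcContract a j.rev i.rev := by
  funext i
  have hj := j.2
  have hi := i.2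
  simp only [hcContract, Fin.val_rev]
  split_ifs <;>
    first
      | omega
      | simp [my_rev_succ, my_rev_castSucc, mul_comm]

lemma my_key {n : ℕ} (f : (Fin n → A) → A) (a : Fin (n+1) → A) :
    hcDeltaA (hcRev f) a = hcRev (hcDeltaA f) a := by
  have hss : (-1:ℤ)^((n+1)*((n+1)+1)/2) * (-1:ℤ)^(n+1) = (-1:ℤ)^(n*(n+1)/2) := by
    rw [my_sign_succ, mul_assoc, ← pow_add]
    rw [Even.neg_one_pow ⟨n+1, rfl⟩, mul_one]
  have hFG : (fun i : Fin n => a (i.rev).succ) = (fun i => a (i.castSucc).rev) := by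
    funext i; rw [my_rev_succ]
  have hGF : (fun i : Fin n => a (i.rev).castSucc) = (fun i => a (i.succ).rev) := by
    funext i; rw [my_rev_castSucc]
  have hsgn : ∀ j : Fin n, (-1:ℤ)^((j:ℕ)+1) * (-1:ℤ)^(n*(n+1)/2)
      = (-1:ℤ)^((n+1)*((n+1)+1)/2) * (-1:ℤ)^(((j.rev : Fin n):ℕ)+1) := by
    intro j
    have hj := j.2
    have hv : ((j.rev : Fin n):ℕ) = n - (j + 1) := Fin.val_rev j
    rw [hv, my_sign_succ, ← pow_add, mul_assoc, ← pow_add, ← pow_add]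
    apply my_neg_one_pow_parity
    generalize n*(n+1)/2 = t
    omega
  simp only [hcDeltaA, hcDiff, hcRev]
  rw [smul_add, smul_add, Finset.smul_sum]
  have e1 : a 0 * ((-1:ℤ)^(n*(n+1)/2) • f fun i => a (i.rev).succ)
      = (-1:ℤ)^((n+1)*((n+1)+1)/2) •
        ((-1:ℤ)^(n+1) • ((f fun i => a (i.castSucc).rev) * a (Fin.rev (Fin.last n)))) := by
    rw [hFG, Fin.rev_last, smul_smul, hss, mul_smul_comm, mul_comm (a 0)]
  have e3 : (-1:ℤ)^(n+1) • (((-1:ℤ)^(n*(n+1)/2) • f fun i => a (i.rev).castSucc) * a (Fin.last n))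
      = (-1:ℤ)^((n+1)*((n+1)+1)/2) • (a (Fin.rev 0) * f fun i => a (i.succ).rev) := by
    rw [hGF, Fin.rev_zero, smul_mul_assoc, smul_smul, mul_comm ((-1:ℤ)^(n+1)), ← hss,
      mul_comm (f fun i => a (i.succ).rev)]
    rw [mul_assoc, ← pow_add, Even.neg_one_pow ⟨n+1, rfl⟩, mul_one]
  have e2 : (∑ j : Fin n, (-1:ℤ)^((j:ℕ)+1) • ((-1:ℤ)^(n*(n+1)/2) • f fun i => hcContract a j i.rev))
      = ∑ j : Fin n, (-1:ℤ)^((n+1)*((n+1)+1)/2) •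
          ((-1:ℤ)^((j:ℕ)+1) • f (hcContract (fun i => a i.rev) j)) := by
    refine Fintype.sum_equiv Fin.revPerm _ _ ?_
    intro j
    rw [my_contract_rev, Fin.revPerm_apply, Fin.rev_rev]
    rw [smul_smul, smul_smul, hsgn j]
  rw [e1, e2, e3]
  abel

lemma my_rev_rev {n : ℕ} (f : (Fin n → A) → A) : hcRev (hcRev f) = f := by
  funext a
  simp only [hcRev, Fin.rev_rev, smul_smul, ← pow_add]
  rw [Even.neg_one_pow ⟨n*(n+1)/2, rfl⟩, one_smul]

lemma my_delta_zero {k : Type*} [Field k] [Algebra k A] {m : ℕ}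
    (b : Fin (m+1) → A) :
    hcDeltaA (⇑(0 : MultilinearMap k (fun _ : Fin m => A) A)) b = 0 := by
  simp [hcDeltaA, hcDiff]

lemma my_cohomologous_refl (k : Type*) [Field k] [Algebra k A] {n : ℕ}
    (g : (Fin n → A) → A) : Cohomologous k g g := by
  cases n with
  | zero => exact Or.inl ⟨rfl, rfl⟩
  | succ m =>
    refine Or.inr ⟨m, rfl, 0, fun a => ?_⟩
    rw [my_delta_zero, sub_self]

end MyAux

/-- for commutative `A`, orientation reversal induces a
well-defined `k`-linear involution on Hochschild cohomology: it sends cocycles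
to cocycles, respects the relation of differing by a coboundary, is `k`-linear,
and squares to the identity on cohomology classes. -/
theorem statement15 (k A : Type*) [Field k] [CommRing A] [Algebra k A] :
    -- cocycles go to cocycles
    (∀ (n : ℕ) (f : MultilinearMap k (fun _ : Fin n => A) A),
        (∀ a, hcDeltaA (⇑f) a = 0) → ∀ a, hcDeltaA (hcRev (⇑f)) a = 0) ∧
    -- well-definedness on cohomology classes
    (∀ (n : ℕ) (f f' : MultilinearMap k (fun _ : Fin n => A) A),
        (∀ a, hcDeltaA (⇑f) a = 0) → (∀ a, hcDeltaA (⇑f') a = 0) →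
        Cohomologous k (⇑f) (⇑f') → Cohomologous k (hcRev (⇑f)) (hcRev (⇑f'))) ∧
    -- k-linearity
    (∀ (n : ℕ) (f g : MultilinearMap k (fun _ : Fin n => A) A),
        hcRev (⇑f + ⇑g) = hcRev (⇑f) + hcRev (⇑g)) ∧
    (∀ (n : ℕ) (c : k) (f : MultilinearMap k (fun _ : Fin n => A) A),
        hcRev (c • ⇑f) = c • hcRev (⇑f)) ∧
    -- involution on cohomology classes
    (∀ (n : ℕ) (f : MultilinearMap k (fun _ : Fin n => A) A),
        (∀ a, hcDeltaA (⇑f) a = 0) → Cohomologous k (hcRev (hcRev (⇑f))) (⇑f)) := by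

  refine ⟨?_, ?_, ?_, ?_, ?_⟩
  · intro n f hf a
    rw [my_key, hcRev]
    simp [hf]
  · intro n f f' _ _ hcoh
    rcases hcoh with ⟨hn, hf⟩ | ⟨m, hm, h, hh⟩
    · exact Or.inl ⟨hn, by rw [hf]⟩
    · refine Or.inr ⟨m, hm, ((-1:ℤ)^(m*(m+1)/2)) • h.domDomCongr (Fin.revPerm), fun a => ?_⟩
      have hco : ⇑(((-1:ℤ)^(m*(m+1)/2)) • h.domDomCongr (Fin.revPerm)) = hcRev (⇑h) := by
        funext v
        simp [hcRev, MultilinearMap.domDomCongr]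
      rw [hco]
      have hkey := my_key (⇑h) (fun i => a (Fin.cast hm i))
      rw [hkey]
      simp only [hcRev]
      rw [← smul_sub]
      subst hm
      have harg : (fun i : Fin (m+1) => (fun j : Fin (m+1) => a (Fin.cast rfl j)) i.rev)
          = fun i : Fin (m+1) => (fun j => a j.rev) (Fin.cast rfl i) := by
        funext i; rfl
      rw [harg]
      rw [← hh (fun j => a j.rev)]
  · intro n f g
    funext a
    simp [hcRev, smul_add]
  · intro n c f
    funext a
    simp only [hcRev, Pi.smul_apply]
    rw [smul_comm]
  · intro n f _
    rw [my_rev_rev]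
    exact my_cohomologous_refl k _
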